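/- arXiv:2402.14201 — 8 statements merged into one kernel-verified Lean document; each statement's English description precedes it below -/
import Mathlib

section
/- Let H be a finite family of axis-aligned boxes in R^d such that for any two boxes H1, H2 in H and every dimension j, the ratio of their side lengths in dimension j satisfies l_j(H1)/l_j(H2) ∈ [1/Δ, Δ] for some positive integer Δ. Then for any maximal pairwise-disjoint subfamily H' ⊆ H, the maximum number of pairwise disjoint boxes in H is at most (2Δ)^d · |H'|. -/
open scoped Classical

/-- One-dimensional grid lemma: if an interval `[a,b]` of length at least `(e-c)/Δ`
contains a point `x` that also lies in `[c,e]`, then `[a,b]` contains a grid point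
`c + k * (e-c)/Δ` with `0 ≤ k ≤ Δ`. -/
lemma grid_step (Δ : ℕ) (hΔ : 1 ≤ Δ) (a b c e x : ℝ)
    (hax : a ≤ x) (hxb : x ≤ b) (hcx : c ≤ x) (hxe : x ≤ e)
    (hce : 0 < e - c) (hlen : (e - c) / Δ ≤ b - a) :
    ∃ k : ℕ, k ≤ Δ ∧ a ≤ c + k * ((e - c) / Δ) ∧ c + k * ((e - c) / Δ) ≤ b := by
  have hΔ0 : (0:ℝ) < Δ := by
    have : (1:ℝ) ≤ Δ := by exact_mod_cast hΔ
    linarith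
  set h : ℝ := (e - c) / Δ with hh
  have hh0 : 0 < h := div_pos hce hΔ0
  by_cases hac : a ≤ c
  · refine ⟨0, Nat.zero_le _, ?_, ?_⟩
    · simpa using hac
    · simp only [Nat.cast_zero, zero_mul, add_zero]
      linarith
  · push_neg at hac
    obtain ⟨K, hK⟩ : ∃ K : ℤ, K = ⌈(a - c) / h⌉ := ⟨_, rfl⟩
    have hK0 : 0 ≤ K := hK ▸ Int.ceil_nonneg (div_nonneg (by linarith : (0:ℝ) ≤ a - c) hh0.le)
    have hKle : K ≤ (Δ : ℤ) := by
      rw [hK]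
      apply Int.ceil_le.mpr
      rw [div_le_iff₀ hh0]
      have : (Δ:ℝ) * h = e - c := by
        rw [hh]; field_simp
      push_cast
      nlinarith
    refine ⟨K.toNat, ?_, ?_, ?_⟩
    · omega
    · have hcast : ((K.toNat : ℕ) : ℝ) = (K : ℝ) := by
        exact_mod_cast congrArg (Int.cast : ℤ → ℝ) (Int.toNat_of_nonneg hK0)
      rw [hcast]
      have := Int.le_ceil ((a - c) / h)
      rw [← hK] at this
      have h2 : (a - c) / h * h ≤ (K:ℝ) * h := by
        apply mul_le_mul_of_nonneg_right this hh0.le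
      rw [div_mul_cancel₀ _ hh0.ne'] at h2
      linarith
    · have hcast : ((K.toNat : ℕ) : ℝ) = (K : ℝ) := by
        exact_mod_cast congrArg (Int.cast : ℤ → ℝ) (Int.toNat_of_nonneg hK0)
      rw [hcast]
      have := Int.ceil_lt_add_one ((a - c) / h)
      rw [← hK] at this
      have h2 : (K:ℝ) * h < ((a - c) / h + 1) * h := by
        apply mul_lt_mul_of_pos_right this hh0
      have h3 : ((a - c) / h + 1) * h = (a - c) + h := by
        field_simp
      nlinarith

/-- For a finite family of axis-aligned boxes in `ℝ^d` whose side-length ratios in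
each dimension lie in `[1/Δ, Δ]`, the maximum number of pairwise disjoint boxes is
at most `(2Δ)^d` times the size of any maximal pairwise-disjoint subfamily. -/
theorem maximal_disjoint_boxes_approx (d Δ : ℕ) (hΔ : 1 ≤ Δ)
    (𝓗 : Finset ((Fin d → ℝ) × (Fin d → ℝ)))
    (hratio : ∀ p ∈ 𝓗, ∀ q ∈ 𝓗, ∀ j : Fin d,
      (1 / (Δ : ℝ)) ≤ (p.2 j - p.1 j) / (q.2 j - q.1 j) ∧
      (p.2 j - p.1 j) / (q.2 j - q.1 j) ≤ (Δ : ℝ))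
    (H' : Finset ((Fin d → ℝ) × (Fin d → ℝ))) (hsub : H' ⊆ 𝓗)
    (hdisj : ∀ p ∈ H', ∀ q ∈ H', p ≠ q →
      Disjoint (Set.Icc p.1 p.2) (Set.Icc q.1 q.2))
    (hmaximal : ∀ p ∈ 𝓗, p ∉ H' → ∃ q ∈ H',
      ¬ Disjoint (Set.Icc p.1 p.2) (Set.Icc q.1 q.2)) :
    ∀ S ⊆ 𝓗,
      (∀ p ∈ S, ∀ q ∈ S, p ≠ q →
        Disjoint (Set.Icc p.1 p.2) (Set.Icc q.1 q.2)) →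
      S.card ≤ (2 * Δ) ^ d * H'.card := by
  intro S hS hSdisj
  have hΔ0 : (0:ℝ) < Δ := by
    have : (1:ℝ) ≤ Δ := by exact_mod_cast hΔ
    linarith
  have hpow1 : 1 ≤ (2 * Δ) ^ d := Nat.one_le_pow _ _ (by omega)
  by_cases hpos : ∀ p ∈ 𝓗, ∀ j : Fin d, 0 < p.2 j - p.1 j
  · -- Main case: all boxes nondegenerate.
    -- Side length lower bound.
    have hlenb : ∀ p ∈ 𝓗, ∀ q ∈ 𝓗, ∀ j : Fin d,
        (q.2 j - q.1 j) / Δ ≤ p.2 j - p.1 j := by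
      intro p hp q hq j
      have h1 := (hratio p hp q hq j).1
      have hq0 := hpos q hq j
      rw [div_le_div_iff₀ hΔ0 hq0] at h1
      rw [div_le_iff₀ hΔ0]
      nlinarith
    -- Each box of S intersects some box of H'.
    have hinter : ∀ s ∈ S, ∃ q ∈ H', ∃ x : Fin d → ℝ,
        x ∈ Set.Icc s.1 s.2 ∧ x ∈ Set.Icc q.1 q.2 := by
      intro s hs
      by_cases hsH : s ∈ H'
      · refine ⟨s, hsH, s.1, ?_, ?_⟩ <;>
        · constructor
          · exact le_refl _
          · intro j
            have := hpos s (hS hs) j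
            linarith
      · obtain ⟨q, hq, hnd⟩ := hmaximal s (hS hs) hsH
        obtain ⟨x, hx1, hx2⟩ := Set.not_disjoint_iff.mp hnd
        exact ⟨q, hq, x, hx1, hx2⟩
    -- For each s, find a target q and grid indices k.
    have key : ∀ s : (Fin d → ℝ) × (Fin d → ℝ), ∃ q : (Fin d → ℝ) × (Fin d → ℝ),
        ∃ k : Fin d → ℕ, s ∈ S → (q ∈ H' ∧ (∀ j, k j ≤ Δ) ∧
          ∀ j, s.1 j ≤ q.1 j + k j * ((q.2 j - q.1 j) / Δ) ∧
               q.1 j + k j * ((q.2 j - q.1 j) / Δ) ≤ s.2 j) := by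
      intro s
      by_cases hs : s ∈ S
      · obtain ⟨q, hq, x, hx1, hx2⟩ := hinter s hs
        have hstep : ∀ j : Fin d, ∃ k : ℕ, k ≤ Δ ∧
            s.1 j ≤ q.1 j + k * ((q.2 j - q.1 j) / Δ) ∧
            q.1 j + k * ((q.2 j - q.1 j) / Δ) ≤ s.2 j := by
          intro j
          have h1 := hx1.1 j
          have h2 := hx1.2 j
          have h3 := hx2.1 j
          have h4 := hx2.2 j
          have h5 := hpos q (hsub hq) j
          have h6 := hlenb s (hS hs) q (hsub hq) j
          obtain ⟨k, hk1, hk2, hk3⟩ := grid_step Δ hΔ (s.1 j) (s.2 j) (q.1 j)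
            (q.2 j) (x j) h1 h2 h3 h4 h5 h6
          exact ⟨k, hk1, hk2, hk3⟩
        choose k hk1 hk2 using hstep
        exact ⟨q, k, fun _ => ⟨hq, hk1, hk2⟩⟩
      · exact ⟨s, fun _ => 0, fun h => absurd h hs⟩
    choose qf kf hqk using key
    -- The map s ↦ (qf s, kf s) is injective on S.
    set T : Finset (((Fin d → ℝ) × (Fin d → ℝ)) × (Fin d → ℕ)) :=
      H' ×ˢ Fintype.piFinset (fun _ : Fin d => Finset.range (Δ + 1)) with hT
    have hmaps : ∀ s ∈ S, (qf s, kf s) ∈ T := by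
      intro s hs
      obtain ⟨hq, hk1, _⟩ := hqk s hs
      rw [hT, Finset.mem_product]
      refine ⟨hq, ?_⟩
      rw [Fintype.mem_piFinset]
      intro j
      rw [Finset.mem_range]
      exact Nat.lt_succ_of_le (hk1 j)
    have hinj : Set.InjOn (fun s => (qf s, kf s)) ↑S := by
      intro s hs t ht heq
      by_contra hne
      simp only [Set.mem_setOf_eq, Finset.coe_sort_coe, Finset.mem_coe] at hs ht
      have hqe : qf s = qf t := congrArg Prod.fst heq
      have hke : kf s = kf t := congrArg Prod.snd heq
      obtain ⟨_, _, hg1⟩ := hqk s hs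
      obtain ⟨_, _, hg2⟩ := hqk t ht
      set g : Fin d → ℝ := fun j => (qf s).1 j + kf s j * (((qf s).2 j - (qf s).1 j) / Δ)
        with hg
      have hgs : g ∈ Set.Icc s.1 s.2 := ⟨fun j => (hg1 j).1, fun j => (hg1 j).2⟩
      have hgt : g ∈ Set.Icc t.1 t.2 := by
        refine ⟨fun j => ?_, fun j => ?_⟩
        · have := (hg2 j).1
          rw [hg]; simp only []
          rw [hqe, hke]; exact this
        · have := (hg2 j).2
          rw [hg]; simp only []
          rw [hqe, hke]; exact this
      exact Set.disjoint_left.mp (hSdisj s hs t ht hne) hgs hgt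
    have hcard : S.card ≤ T.card := Finset.card_le_card_of_injOn _ hmaps hinj
    have hTcard : T.card = H'.card * (Δ + 1) ^ d := by
      rw [hT, Finset.card_product, Fintype.card_piFinset]
      simp [Finset.card_range]
    rw [hTcard] at hcard
    calc S.card ≤ H'.card * (Δ + 1) ^ d := hcard
      _ ≤ H'.card * (2 * Δ) ^ d := by
          apply Nat.mul_le_mul_left
          apply Nat.pow_le_pow_left
          omega
      _ = (2 * Δ) ^ d * H'.card := Nat.mul_comm _ _
  · -- Degenerate case: some box has a nonpositive side, so all boxes are empty.
    push_neg at hpos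
    obtain ⟨p, hp, j, hpj⟩ := hpos
    -- In dimension j every box of 𝓗 has negative side length.
    have hneg : ∀ q ∈ 𝓗, q.2 j - q.1 j < 0 := by
      intro q hq
      have h1 := (hratio p hp q hq j).1
      have h1' : 0 < (p.2 j - p.1 j) / (q.2 j - q.1 j) := by
        have : (0:ℝ) < 1 / Δ := by positivity
        linarith
      have hpneg : p.2 j - p.1 j < 0 := by
        rcases lt_trichotomy (p.2 j - p.1 j) 0 with h | h | h
        · exact h
        · exfalso; rw [h, zero_div] at h1'; linarith
        · linarith
      by_contra hc
      push_neg at hc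
      rcases eq_or_lt_of_le hc with h | h
      · rw [← h, div_zero] at h1'; linarith
      · have : (p.2 j - p.1 j) / (q.2 j - q.1 j) < 0 := div_neg_of_neg_of_pos hpneg h
        linarith
    have hempty : ∀ q ∈ 𝓗, Set.Icc q.1 q.2 = (∅ : Set (Fin d → ℝ)) := by
      intro q hq
      rw [Set.eq_empty_iff_forall_notMem]
      intro y hy
      have h1 := hy.1 j
      have h2 := hy.2 j
      have := hneg q hq
      linarith
    have hHH : 𝓗 ⊆ H' := by
      intro q hq
      by_contra hqH
      obtain ⟨r, hr, hnd⟩ := hmaximal q hq hqH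
      apply hnd
      rw [hempty q hq]
      exact Set.empty_disjoint _
    have h1 : S.card ≤ H'.card := Finset.card_le_card (hS.trans hHH)
    calc S.card ≤ H'.card := h1
      _ = 1 * H'.card := (Nat.one_mul _).symm
      _ ≤ (2 * Δ) ^ d * H'.card := Nat.mul_le_mul_right _ hpow1
end

section
/- Let H be a single axis-aligned box in R^d with side lengths l_1,...,l_d. Partition H into Δ^d congruent sub-boxes by Δ-1 equally spaced axis-aligned hyperplanes in each dimension. Then any axis-aligned box B that intersects H and whose side length in each dimension j lies in [l_j/Δ, Δ·l_j] must contain a corner of at least one of these sub-boxes. -/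
lemma box_subdivision_corner_aux (Δ : ℕ) (hΔ : 1 ≤ Δ) (lo hi a b : ℝ)
    (hlh : lo ≤ hi) (h1 : (hi - lo) / Δ ≤ b - a)
    (hah : a ≤ hi) (hlb : lo ≤ b) :
    ∃ i : ℕ, i ≤ Δ ∧ a ≤ lo + (i : ℝ) * (hi - lo) / Δ ∧
      lo + (i : ℝ) * (hi - lo) / Δ ≤ b := by
  have hΔ' : (0:ℝ) < Δ := by positivity
  have hh0 : 0 ≤ (hi - lo) / Δ := div_nonneg (by linarith) hΔ'.le
  rcases le_or_gt a lo with hal | hal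
  · exact ⟨0, Nat.zero_le _, by simpa using hal, by simpa using hlb⟩
  rcases eq_or_lt_of_le hlh with heq | hlt
  · exact absurd (hah.trans_lt (heq ▸ hal)) (lt_irrefl _)
  have hpos : 0 < (hi - lo) / Δ := div_pos (by linarith) hΔ'
  set h : ℝ := (hi - lo) / Δ with hh
  refine ⟨⌈(a - lo) / h⌉₊, ?_, ?_, ?_⟩
  · rw [Nat.ceil_le, div_le_iff₀ hpos]
    have hΔh : (Δ:ℝ) * h = hi - lo := by rw [hh]; field_simp
    linarith
  · have := Nat.le_ceil ((a - lo) / h)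
    rw [div_le_iff₀ hpos] at this
    rw [mul_div_assoc, ← hh]
    linarith
  · have hnn : 0 ≤ (a - lo) / h := div_nonneg (by linarith) hpos.le
    have hc := Nat.ceil_lt_add_one hnn
    have h2 : (⌈(a - lo) / h⌉₊ : ℝ) * h < (a - lo) + h :=
      calc (⌈(a - lo) / h⌉₊ : ℝ) * h < ((a - lo) / h + 1) * h :=
            mul_lt_mul_of_pos_right hc hpos
        _ = (a - lo) + h := by field_simp
    rw [mul_div_assoc, ← hh]
    linarith

/-- Partition a box `H = Icc lo hi` into `Δ^d` congruent sub-boxes using `Δ - 1`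
equally spaced hyperplanes in each dimension.  Any axis-aligned box `B = Icc a b`
that intersects `H`, and whose side length in each dimension `j` lies in
`[l_j / Δ, Δ * l_j]`, contains a corner of one of the sub-boxes, i.e. a grid point
`lo j + i_j * l_j / Δ` with `0 ≤ i_j ≤ Δ`. -/
theorem box_subdivision_corner (d Δ : ℕ) (hΔ : 1 ≤ Δ)
    (lo hi : Fin d → ℝ) (hlohi : ∀ j, lo j ≤ hi j)
    (a b : Fin d → ℝ)
    (hside : ∀ j, (hi j - lo j) / Δ ≤ b j - a j ∧ b j - a j ≤ Δ * (hi j - lo j))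
    (hinter : (Set.Icc a b ∩ Set.Icc lo hi).Nonempty) :
    ∃ i : Fin d → ℕ, (∀ j, i j ≤ Δ) ∧
      (fun j => lo j + (i j : ℝ) * (hi j - lo j) / Δ) ∈ Set.Icc a b := by
  obtain ⟨x, ⟨hxa, hxb⟩, ⟨hxlo, hxhi⟩⟩ := hinter
  have key : ∀ j, ∃ i : ℕ, i ≤ Δ ∧ a j ≤ lo j + (i : ℝ) * (hi j - lo j) / Δ ∧
      lo j + (i : ℝ) * (hi j - lo j) / Δ ≤ b j := fun j =>
    box_subdivision_corner_aux Δ hΔ (lo j) (hi j) (a j) (b j) (hlohi j)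
      (hside j).1 ((hxa j).trans (hxhi j)) ((hxlo j).trans (hxb j))
  choose i hi1 hi2 hi3 using key
  exact ⟨i, hi1, fun j => hi2 j, fun j => hi3 j⟩
end

section
/- There are N balls of which M are red; set p = M/N. A sample of n balls is drawn uniformly at random without replacement, and X is the number of red balls in the sample. For every δ with 0 ≤ δ ≤ 1: Pr[X ≥ (1+δ)pn] ≤ exp(−δ²pn/3) and Pr[X ≤ (1−δ)pn] ≤ exp(−δ²pn/2). -/
/-!
Writing `(1 + μ) ^ X = ∑ₖ (X choose k) μᵏ`, the factorial moments of the hypergeometric count,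
`𝔼[(X choose k)] = (M choose k) (N - k choose n - k) / (N choose n)`, are at most
`(n choose k) pᵏ`, those of the binomial law `Bin(n, p)`. Hence `𝔼[(1 + μ) ^ X] ≤ (1 + p μ) ^ n`
for `μ ≥ 0`, and the usual Chernoff argument for binomial tails goes through verbatim. For the
lower tail one applies the same bound to the `n - X` non-red balls of the sample.
-/

open Finset Real

theorem Nat.descFactorial_mul_pow_le_descFactorial_mul_pow {m N : ℕ} (h : m ≤ N) (k : ℕ) :
    m.descFactorial k * N ^ k ≤ N.descFactorial k * m ^ k := by
  induction k with
  | zero => simp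
  | succ k ih =>
    have hstep : (m - k) * N ≤ (N - k) * m := by
      rw [Nat.sub_mul, Nat.sub_mul, Nat.mul_comm m N]
      exact Nat.sub_le_sub_left (Nat.mul_le_mul_left k h) _
    calc m.descFactorial (k + 1) * N ^ (k + 1)
        = ((m - k) * N) * (m.descFactorial k * N ^ k) := by
          rw [Nat.descFactorial_succ, pow_succ]; ring
      _ ≤ ((N - k) * m) * (N.descFactorial k * m ^ k) := Nat.mul_le_mul hstep ih
      _ = N.descFactorial (k + 1) * m ^ (k + 1) := by
          rw [Nat.descFactorial_succ, pow_succ]; ring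

theorem Nat.choose_mul_pow_le_choose_mul_pow {m N : ℕ} (h : m ≤ N) (k : ℕ) :
    m.choose k * N ^ k ≤ N.choose k * m ^ k := by
  have := Nat.descFactorial_mul_pow_le_descFactorial_mul_pow h k
  rw [Nat.descFactorial_eq_factorial_mul_choose, Nat.descFactorial_eq_factorial_mul_choose,
    Nat.mul_assoc, Nat.mul_assoc] at this
  exact Nat.le_of_mul_le_mul_left this (Nat.factorial_pos k)

/-- `𝔼[(X choose k)] ≤ (n choose k) pᵏ` for `X` hypergeometric with red fraction `p = m / N`,
written with both sides multiplied by `N choose n`. -/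
theorem choose_mul_choose_sub_le {m N n k : ℕ} (hm : m ≤ N) (hk : k ≤ n) :
    (m.choose k : ℝ) * (N - k).choose (n - k) ≤ n.choose k * ((m : ℝ) / N) ^ k * N.choose n := by
  rcases N.eq_zero_or_pos with rfl | hN
  · obtain rfl : m = 0 := Nat.le_zero.mp hm
    rcases k.eq_zero_or_pos with rfl | hk
    · simp
    · simp [Nat.choose_eq_zero_of_lt hk]
      positivity
  have hnat : m.choose k * (N - k).choose (n - k) * N ^ k ≤ n.choose k * m ^ k * N.choose n :=
    calc m.choose k * (N - k).choose (n - k) * N ^ k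
        = (m.choose k * N ^ k) * (N - k).choose (n - k) := by ring
      _ ≤ (N.choose k * m ^ k) * (N - k).choose (n - k) :=
          Nat.mul_le_mul_right _ (Nat.choose_mul_pow_le_choose_mul_pow hm k)
      _ = n.choose k * m ^ k * N.choose n := by
          rw [mul_right_comm, ← Nat.choose_mul hk]; ring
  rw [div_pow, mul_div_assoc', div_mul_eq_mul_div, le_div_iff₀ (by positivity)]
  exact_mod_cast hnat

theorem one_add_pow_eq_sum_range_choose {S : Type*} [CommSemiring S] (x : S) {j n : ℕ}
    (hj : j ≤ n) : (1 + x) ^ j = ∑ k ∈ range (n + 1), (j.choose k : S) * x ^ k := by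
  rw [add_comm, add_pow, ← sum_subset (range_subset_range.mpr (Nat.succ_le_succ hj))]
  · exact sum_congr rfl fun k _ => by rw [one_pow, mul_one, mul_comm]
  · intro k _ hk
    rw [Nat.choose_eq_zero_of_lt (by simpa using hk), Nat.cast_zero, zero_mul]

theorem one_add_pow_le_exp_mul {x : ℝ} (hx : -1 ≤ x) (n : ℕ) : (1 + x) ^ n ≤ exp (n * x) := by
  rw [exp_nat_mul]
  exact pow_le_pow_left₀ (by linarith) (by linarith [add_one_le_exp x]) n

theorem exp_neg_le_one_sub_add_sq_div_two {x : ℝ} (hx : 0 ≤ x) : exp (-x) ≤ 1 - x + x ^ 2 / 2 := by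
  have hq : 0 ≤ 1 - x + x ^ 2 / 2 := by nlinarith
  -- `(1 + x + x²/2)(1 - x + x²/2) = 1 + x⁴/4`
  have hprod : 1 ≤ (1 + x + x ^ 2 / 2) * (1 - x + x ^ 2 / 2) := by nlinarith [pow_nonneg hx 4]
  calc exp (-x) ≤ exp (-x) * ((1 + x + x ^ 2 / 2) * (1 - x + x ^ 2 / 2)) :=
        le_mul_of_one_le_right (exp_pos _).le hprod
    _ ≤ exp (-x) * (exp x * (1 - x + x ^ 2 / 2)) := by
        gcongr; exact quadratic_le_exp_of_nonneg hx
    _ = 1 - x + x ^ 2 / 2 := by rw [← mul_assoc, ← exp_add, neg_add_cancel, exp_zero, one_mul]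

theorem exists_exp_sub_one_sub_mul_le {δ : ℝ} (hδ0 : 0 ≤ δ) (hδ1 : δ ≤ 1) :
    ∃ t, 0 ≤ t ∧ exp t - 1 - t * (1 + δ) ≤ -(δ ^ 2 / 3) := by
  refine ⟨3 * δ / (3 + δ), by positivity, ?_⟩
  set t := 3 * δ / (3 + δ) with ht
  have ht1 : t ≤ 1 := by rw [ht, div_le_one (by linarith)]; linarith
  have hexp : exp t ≤ 1 + t + t ^ 2 / 2 + t ^ 3 * (2 / 9) := by
    have h := exp_bound' (by positivity) ht1 (n := 3) (by norm_num)
    norm_num [sum_range_succ, Nat.factorial] at h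
    linarith
  have hpoly : t ^ 2 / 2 + t ^ 3 * (2 / 9) - t * δ + δ ^ 2 / 3
      = δ ^ 2 * (2 * δ ^ 3 + 9 * δ - 27) / (6 * (3 + δ) ^ 3) := by
    rw [ht]; field_simp; ring
  have hneg : δ ^ 2 * (2 * δ ^ 3 + 9 * δ - 27) / (6 * (3 + δ) ^ 3) ≤ 0 :=
    div_nonpos_of_nonpos_of_nonneg
      (mul_nonpos_of_nonneg_of_nonpos (by positivity) (by nlinarith [pow_le_one₀ hδ0 hδ1 (n := 3)]))
      (by positivity)
  nlinarith

theorem card_filter_le_mul_exp {β : Type*} {Ω : Finset β} (P : β → Prop) [DecidablePred P]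
    (f : β → ℝ) {c C E B : ℝ} (hc : ∀ s ∈ Ω, P s → c ≤ f s)
    (hmgf : ∑ s ∈ Ω, exp (f s) ≤ C * exp E) (hB : E - c ≤ B) :
    (#(Ω.filter P) : ℝ) ≤ C * exp B := by
  have hmarkov : #(Ω.filter P) * exp c ≤ ∑ s ∈ Ω, exp (f s) :=
    calc #(Ω.filter P) * exp c ≤ ∑ s ∈ Ω.filter P, exp (f s) := by
          rw [← nsmul_eq_mul]
          exact card_nsmul_le_sum _ _ _ fun s hs =>
            exp_le_exp.mpr (hc s (mem_filter.mp hs).1 (mem_filter.mp hs).2)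
      _ ≤ ∑ s ∈ Ω, exp (f s) :=
          sum_le_sum_of_subset_of_nonneg (filter_subset _ _) fun _ _ _ => (exp_pos _).le
  have hC : 0 ≤ C := (mul_nonneg_iff_of_pos_right (exp_pos E)).mp
    ((sum_nonneg fun _ _ => (exp_pos _).le).trans hmgf)
  calc (#(Ω.filter P) : ℝ) = #(Ω.filter P) * exp c * exp (-c) := by
        rw [mul_assoc, ← exp_add, add_neg_cancel, exp_zero, mul_one]
    _ ≤ C * exp E * exp (-c) := by gcongr ?_ * _; exact hmarkov.trans hmgf
    _ = C * exp (E - c) := by rw [mul_assoc, ← exp_add, sub_eq_add_neg]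
    _ ≤ C * exp B := by gcongr

section Hypergeometric

variable {α : Type*} [DecidableEq α] {U R : Finset α} {n : ℕ}

theorem sum_choose_card_inter_powersetCard (hR : R ⊆ U) {k : ℕ} (hk : k ≤ n) :
    ∑ s ∈ U.powersetCard n, (#(s ∩ R)).choose k = (#R).choose k * (#U - k).choose (n - k) := by
  calc ∑ s ∈ U.powersetCard n, (#(s ∩ R)).choose k
      = ∑ s ∈ U.powersetCard n, ∑ T ∈ R.powersetCard k, if T ⊆ s then 1 else 0 := by
        refine sum_congr rfl fun s _ => ?_
        rw [← card_filter, ← card_powersetCard]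
        congr 1
        ext T
        simp only [mem_powersetCard, mem_filter, subset_inter_iff]
        tauto
    _ = ∑ T ∈ R.powersetCard k, #((U.powersetCard n).filter (T ⊆ ·)) := by
        rw [sum_comm]; simp only [card_filter]
    _ = (#R).choose k * (#U - k).choose (n - k) := by
        rw [sum_congr rfl fun T hT => ?_, sum_const, card_powersetCard, smul_eq_mul]
        obtain ⟨hTR, rfl⟩ := mem_powersetCard.mp hT
        exact card_filter_powersetCard_subset T U _ (hTR.trans hR) hk

theorem sum_one_add_pow_card_inter_le (hR : R ⊆ U) {μ : ℝ} (hμ : 0 ≤ μ) :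
    ∑ s ∈ U.powersetCard n, (1 + μ) ^ #(s ∩ R) ≤ (#U).choose n * (1 + #R / #U * μ) ^ n := by
  have hsub : ∀ s ∈ U.powersetCard n, #(s ∩ R) ≤ n := fun s hs =>
    (card_le_card inter_subset_left).trans (mem_powersetCard.mp hs).2.le
  calc ∑ s ∈ U.powersetCard n, (1 + μ) ^ #(s ∩ R)
      = ∑ k ∈ range (n + 1), ∑ s ∈ U.powersetCard n, ((#(s ∩ R)).choose k : ℝ) * μ ^ k := by
        rw [sum_comm]
        exact sum_congr rfl fun s hs => one_add_pow_eq_sum_range_choose μ (hsub s hs)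
    _ = ∑ k ∈ range (n + 1), ((#R).choose k * (#U - k).choose (n - k) : ℝ) * μ ^ k := by
        refine sum_congr rfl fun k hk => ?_
        rw [← sum_mul, ← Nat.cast_sum,
          sum_choose_card_inter_powersetCard hR (Nat.lt_succ_iff.mp (mem_range.mp hk))]
        push_cast; rfl
    _ ≤ ∑ k ∈ range (n + 1), (n.choose k * ((#R : ℝ) / #U) ^ k * (#U).choose n) * μ ^ k := by
        refine sum_le_sum fun k hk => mul_le_mul_of_nonneg_right ?_ (pow_nonneg hμ k)
        exact choose_mul_choose_sub_le (card_le_card hR) (Nat.lt_succ_iff.mp (mem_range.mp hk))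
    _ = (#U).choose n * (1 + #R / #U * μ) ^ n := by
        rw [one_add_pow_eq_sum_range_choose _ le_rfl, mul_sum]
        exact sum_congr rfl fun k _ => by ring

theorem sum_exp_mul_card_inter_le (hR : R ⊆ U) {t : ℝ} (ht : 0 ≤ t) :
    ∑ s ∈ U.powersetCard n, exp (t * #(s ∩ R))
      ≤ (#U).choose n * exp (#R / #U * n * (exp t - 1)) := by
  have hμ : 0 ≤ exp t - 1 := by linarith [add_one_le_exp t]
  have hp : (0 : ℝ) ≤ #R / #U := by positivity
  calc ∑ s ∈ U.powersetCard n, exp (t * #(s ∩ R))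
      = ∑ s ∈ U.powersetCard n, (1 + (exp t - 1)) ^ #(s ∩ R) := by
        simp only [add_sub_cancel, ← exp_nat_mul, mul_comm]
    _ ≤ (#U).choose n * (1 + #R / #U * (exp t - 1)) ^ n := sum_one_add_pow_card_inter_le hR hμ
    _ ≤ (#U).choose n * exp (n * (#R / #U * (exp t - 1))) := by
        gcongr; exact one_add_pow_le_exp_mul (by nlinarith) n
    _ = (#U).choose n * exp (#R / #U * n * (exp t - 1)) := by ring_nf

theorem sum_exp_neg_mul_card_inter_le (hU : U.Nonempty) (hR : R ⊆ U) {t : ℝ} (ht : 0 ≤ t) :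
    ∑ s ∈ U.powersetCard n, exp (-t * #(s ∩ R))
      ≤ (#U).choose n * exp (-(#R / #U * n * (1 - exp (-t)))) := by
  have hU0 : (0 : ℝ) < #U := by exact_mod_cast hU.card_pos
  have hp0 : (0 : ℝ) ≤ #R / #U := by positivity
  have hp1 : (#R : ℝ) / #U ≤ 1 := div_le_one_of_le₀ (by exact_mod_cast card_le_card hR) hU0.le
  have hcompl : ((#(U \ R) : ℕ) : ℝ) / #U = 1 - #R / #U := by
    rw [card_sdiff_of_subset hR, Nat.cast_sub (card_le_card hR), sub_div, div_self hU0.ne']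
  have hsplit : ∀ s ∈ U.powersetCard n,
      exp (-t * #(s ∩ R)) = exp (-t) ^ n * (1 + (exp t - 1)) ^ #(s ∩ (U \ R)) := by
    intro s hs
    obtain ⟨hsU, rfl⟩ := mem_powersetCard.mp hs
    rw [add_sub_cancel, ← exp_nat_mul, ← exp_nat_mul, ← exp_add, ← card_inter_add_card_sdiff s R,
      ← inter_sdiff_assoc, inter_eq_left.mpr hsU]
    push_cast; ring_nf
  have hμ : 0 ≤ exp t - 1 := by linarith [add_one_le_exp t]
  have hbase : exp (-t) * (1 + (1 - #R / #U) * (exp t - 1)) = 1 + -(#R / #U * (1 - exp (-t))) := by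
    rw [exp_neg]; field_simp; ring
  calc ∑ s ∈ U.powersetCard n, exp (-t * #(s ∩ R))
      = exp (-t) ^ n * ∑ s ∈ U.powersetCard n, (1 + (exp t - 1)) ^ #(s ∩ (U \ R)) := by
        rw [mul_sum]; exact sum_congr rfl hsplit
    _ ≤ exp (-t) ^ n * ((#U).choose n * (1 + #(U \ R) / #U * (exp t - 1)) ^ n) := by
        gcongr; exact sum_one_add_pow_card_inter_le sdiff_subset hμ
    _ = (#U).choose n * (1 + -(#R / #U * (1 - exp (-t)))) ^ n := by
        rw [hcompl, ← hbase, mul_pow]; ring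
    _ ≤ (#U).choose n * exp (n * -(#R / #U * (1 - exp (-t)))) := by
        gcongr
        exact one_add_pow_le_exp_mul (by nlinarith [exp_pos (-t)]) n
    _ = (#U).choose n * exp (-(#R / #U * n * (1 - exp (-t)))) := by ring_nf

theorem card_filter_upper_tail_le (hR : R ⊆ U) {δ : ℝ} (hδ0 : 0 ≤ δ) (hδ1 : δ ≤ 1) :
    (#((U.powersetCard n).filter
        (fun s => (1 + δ) * ((#R : ℝ) / #U) * n ≤ (#(s ∩ R) : ℝ))) : ℝ)
      ≤ (#U).choose n * exp (-(δ ^ 2 * ((#R : ℝ) / #U) * n) / 3) := by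
  obtain ⟨t, ht0, ht⟩ := exists_exp_sub_one_sub_mul_le hδ0 hδ1
  have hpn : (0 : ℝ) ≤ #R / #U * n := by positivity
  refine card_filter_le_mul_exp _ (fun s => t * #(s ∩ R)) (c := t * ((1 + δ) * (#R / #U) * n))
    (fun s _ hs => mul_le_mul_of_nonneg_left hs ht0) (sum_exp_mul_card_inter_le hR ht0) ?_
  calc #R / #U * n * (exp t - 1) - t * ((1 + δ) * (#R / #U) * n)
      = #R / #U * n * (exp t - 1 - t * (1 + δ)) := by ring
    _ ≤ #R / #U * n * -(δ ^ 2 / 3) := mul_le_mul_of_nonneg_left ht hpn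
    _ = -(δ ^ 2 * (#R / #U) * n) / 3 := by ring

theorem card_filter_lower_tail_le (hU : U.Nonempty) (hR : R ⊆ U) {δ : ℝ} (hδ0 : 0 ≤ δ) :
    (#((U.powersetCard n).filter
        (fun s => (#(s ∩ R) : ℝ) ≤ (1 - δ) * ((#R : ℝ) / #U) * n)) : ℝ)
      ≤ (#U).choose n * exp (-(δ ^ 2 * ((#R : ℝ) / #U) * n) / 2) := by
  have hpn : (0 : ℝ) ≤ #R / #U * n := by positivity
  refine card_filter_le_mul_exp _ (fun s => -δ * #(s ∩ R)) (c := -δ * ((1 - δ) * (#R / #U) * n))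
    (fun s _ hs => mul_le_mul_of_nonpos_left hs (neg_nonpos.mpr hδ0))
    (sum_exp_neg_mul_card_inter_le hU hR hδ0) ?_
  calc -(#R / #U * n * (1 - exp (-δ))) - -δ * ((1 - δ) * (#R / #U) * n)
      = #R / #U * n * (exp (-δ) - (1 - δ + δ ^ 2 / 2)) - δ ^ 2 * (#R / #U) * n / 2 := by ring
    _ ≤ #R / #U * n * 0 - δ ^ 2 * (#R / #U) * n / 2 := by
        gcongr
        exact sub_nonpos.mpr (exp_neg_le_one_sub_add_sq_div_two hδ0)
    _ = -(δ ^ 2 * (#R / #U) * n) / 2 := by ring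

end Hypergeometric

theorem hypergeometric_concentration_general (N M n : ℕ) (hN : 0 < N) (hM : M ≤ N)
    (δ : ℝ) (hδ0 : 0 ≤ δ) (hδ1 : δ ≤ 1) :
    (((((Finset.range N).powersetCard n).filter
        (fun s => (1 + δ) * ((M : ℝ) / N) * n ≤ ((s ∩ Finset.range M).card : ℝ))).card : ℝ)
        / (((Finset.range N).powersetCard n).card : ℝ)
      ≤ Real.exp (-(δ ^ 2 * ((M : ℝ) / N) * n) / 3)) ∧
    (((((Finset.range N).powersetCard n).filter
        (fun s => ((s ∩ Finset.range M).card : ℝ) ≤ (1 - δ) * ((M : ℝ) / N) * n)).card : ℝ)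
        / (((Finset.range N).powersetCard n).card : ℝ)
      ≤ Real.exp (-(δ ^ 2 * ((M : ℝ) / N) * n) / 2)) := by
  have hRU : range M ⊆ range N := range_subset_range.mpr hM
  have upper := card_filter_upper_tail_le (n := n) hRU hδ0 hδ1
  have lower := card_filter_lower_tail_le (n := n) (nonempty_range_iff.mpr hN.ne') hRU hδ0
  simp only [card_range] at upper lower
  rw [card_powersetCard, card_range]
  exact ⟨div_le_of_le_mul₀ (Nat.cast_nonneg _) (exp_pos _).le (upper.trans_eq (mul_comm _ _)),
    div_le_of_le_mul₀ (Nat.cast_nonneg _) (exp_pos _).le (lower.trans_eq (mul_comm _ _))⟩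

/-- Hypergeometric tail bounds.  A uniformly random `n`-element sample is drawn
without replacement from `N` balls of which `M` are red (modeled as a uniformly
random `n`-element subset of `range N`, the red balls being `range M`), and `X`
is the number of red balls in the sample.  With `p = M / N`, for `0 ≤ δ ≤ 1`:
`Pr[X ≥ (1+δ)pn] ≤ exp(-δ²pn/3)` and `Pr[X ≤ (1-δ)pn] ≤ exp(-δ²pn/2)`. -/
theorem hypergeometric_concentration (N M n : ℕ) (hN : 0 < N) (hM : M ≤ N)
    (hn : n ≤ N) (δ : ℝ) (hδ0 : 0 ≤ δ) (hδ1 : δ ≤ 1) :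
    (((((Finset.range N).powersetCard n).filter
        (fun s => (1 + δ) * ((M : ℝ) / N) * n ≤ ((s ∩ Finset.range M).card : ℝ))).card : ℝ)
        / (((Finset.range N).powersetCard n).card : ℝ)
      ≤ Real.exp (-(δ ^ 2 * ((M : ℝ) / N) * n) / 3)) ∧
    (((((Finset.range N).powersetCard n).filter
        (fun s => ((s ∩ Finset.range M).card : ℝ) ≤ (1 - δ) * ((M : ℝ) / N) * n)).card : ℝ)
        / (((Finset.range N).powersetCard n).card : ℝ)
      ≤ Real.exp (-(δ ^ 2 * ((M : ℝ) / N) * n) / 2)) :=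
  hypergeometric_concentration_general N M n hN hM δ hδ0 hδ1
end

section
/- For all δ ∈ [0,1], the inequality e^δ / (1+δ)^{1+δ} ≤ e^{−δ²/3} holds; equivalently, δ − (1+δ)·log(1+δ) + δ²/3 ≤ 0. -/
open Real

/-- For all `δ ∈ [0,1]`: `e^δ / (1+δ)^(1+δ) ≤ e^(-δ²/3)`; equivalently,
`δ - (1+δ)·log(1+δ) + δ²/3 ≤ 0`. -/
theorem exp_div_rpow_le_upper (δ : ℝ) (h0 : 0 ≤ δ) (h1 : δ ≤ 1) :
    Real.exp δ / (1 + δ) ^ ((1 : ℝ) + δ) ≤ Real.exp (-δ ^ 2 / 3) ∧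
    δ - (1 + δ) * Real.log (1 + δ) + δ ^ 2 / 3 ≤ 0 := by
  -- The Padé-type bound `2δ / (δ + 2) ≤ log (1 + δ)` leaves a rational function of `δ`.
  have key : δ - (1 + δ) * log (1 + δ) + δ ^ 2 / 3 ≤ 0 :=
    calc δ - (1 + δ) * log (1 + δ) + δ ^ 2 / 3
        ≤ δ - (1 + δ) * (2 * δ / (δ + 2)) + δ ^ 2 / 3 := by
          gcongr; exact le_log_one_add_of_nonneg h0
      _ = δ ^ 2 * (δ - 1) / (3 * (δ + 2)) := by field_simp; ring
      _ ≤ 0 := div_nonpos_of_nonpos_of_nonneg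
          (mul_nonpos_of_nonneg_of_nonpos (sq_nonneg δ) (by linarith)) (by positivity)
  refine ⟨?_, key⟩
  rw [rpow_def_of_pos (by linarith), ← exp_sub, exp_le_exp]
  linarith
end

section
/- Let T be a uniformly random subset of {1,...,n} of cardinality ⌈n/2⌉, write T = {X_1 < X_2 < ... < X_{⌈n/2⌉}} and set X_0 = 1, X_{⌈n/2⌉+1} = n. Then with probability at least 1 − 1/n, every consecutive gap satisfies X_i − X_{i−1} ≤ 4⌈log₂ n⌉. -/
/-!
If the sorted list `{1, n} ∪ T` has a gap longer than `L`, then `T` misses a whole window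
`(a, a + L]` contained in `[1, n]`, and there are at most `n` such windows. For `n ≤ 2m`,
removing one point from the ground set at least halves the number of `m`-subsets, so at most
`2⁻ᴸ · C(n, m)` of them avoid a fixed window. With `L = 4⌈log₂ n⌉` we have `n² ≤ 2ᴸ`, and the
union bound leaves at most a `1/n` fraction of bad sets.
-/

open Finset

theorem Nat.two_mul_choose_le_choose_succ {N m : ℕ} (h : N + 1 ≤ 2 * m) :
    2 * N.choose m ≤ (N + 1).choose m := by
  rcases le_or_gt m N with hm | hm
  · refine Nat.le_of_mul_le_mul_right (c := N + 1 - m) ?_ (by omega)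
    calc 2 * N.choose m * (N + 1 - m)
        = N.choose m * (2 * (N + 1 - m)) := by ring
      _ ≤ N.choose m * (N + 1) := Nat.mul_le_mul_left _ (by omega)
      _ = (N + 1).choose m * (N + 1 - m) := Nat.choose_mul_succ_eq N m
  · simp [Nat.choose_eq_zero_of_lt hm]

theorem Nat.two_pow_mul_choose_sub_le_choose {n m : ℕ} (hm : 1 ≤ m) (hnm : n ≤ 2 * m) (L : ℕ) :
    2 ^ L * (n - L).choose m ≤ n.choose m := by
  induction L with
  | zero => simp
  | succ L ih =>
    rcases le_or_gt (L + 1) n with hL | hL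
    · have hstep := Nat.two_mul_choose_le_choose_succ (N := n - (L + 1)) (m := m) (by omega)
      rw [show n - (L + 1) + 1 = n - L by omega] at hstep
      calc 2 ^ (L + 1) * (n - (L + 1)).choose m
          = 2 ^ L * (2 * (n - (L + 1)).choose m) := by ring
        _ ≤ 2 ^ L * (n - L).choose m := Nat.mul_le_mul_left _ hstep
        _ ≤ n.choose m := ih
    · simp [show n - (L + 1) = 0 by omega, Nat.choose_eq_zero_of_lt hm]

theorem List.SortedLT.isChain_sub_le {l : List ℕ} {L : ℕ} (hl : l.SortedLT)
    (h : ∀ a ∈ l, ∀ b ∈ l, a < b → ∃ x ∈ l, a < x ∧ x ≤ a + L) :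
    l.IsChain (fun a b => b - a ≤ L) := by
  rw [List.isChain_iff_getElem]
  intro i hi
  obtain ⟨x, hx, hax, hxL⟩ := h l[i] (l.getElem_mem _) l[i + 1] (l.getElem_mem hi)
    (hl.getElem_lt_getElem_iff.mpr (Nat.lt_succ_self i))
  obtain ⟨k, hk, rfl⟩ := List.getElem_of_mem hx
  have hik : i + 1 ≤ k := Nat.succ_le_of_lt (hl.getElem_lt_getElem_iff.mp hax)
  have : l[i + 1] ≤ l[k] := hl.getElem_le_getElem_iff.mpr hik
  omega

theorem Finset.filter_disjoint_powersetCard {α : Type*} [DecidableEq α] (S W : Finset α) (m : ℕ) :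
    (S.powersetCard m).filter (fun T => Disjoint T W) = (S \ W).powersetCard m := by
  ext T
  simp only [mem_filter, mem_powersetCard, subset_sdiff]
  tauto

theorem card_filter_not_isChain_sort_le {n : ℕ} (hn : 1 ≤ n) (m L : ℕ) :
    (((Icc 1 n).powersetCard m).filter (fun (T : Finset ℕ) =>
        ¬ List.IsChain (fun a b => b - a ≤ L) ((insert n (insert 1 T)).sort (· ≤ ·)))).card
      ≤ (n - L) * (n - L).choose m := by
  set window : ℕ → Finset ℕ := fun a => Ioc a (a + L)
  have hcover : ((Icc 1 n).powersetCard m).filter (fun (T : Finset ℕ) =>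
        ¬ List.IsChain (fun a b => b - a ≤ L) ((insert n (insert 1 T)).sort (· ≤ ·)))
      ⊆ (range (n - L)).biUnion
          (fun a => ((Icc 1 n).powersetCard m).filter (fun T => Disjoint T (window a))) := by
    intro T hT
    obtain ⟨hTP, hbad⟩ := mem_filter.mp hT
    have hTn : ∀ x ∈ insert n (insert 1 T), x ≤ n := by
      simp only [mem_insert]
      rintro x (rfl | rfl | hx)
      · rfl
      · exact hn
      · exact (mem_Icc.mp ((mem_powersetCard.mp hTP).1 hx)).2
    obtain ⟨a, ha, b, hb, hab, hgap⟩ : ∃ a ∈ insert n (insert 1 T), ∃ b ∈ insert n (insert 1 T),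
        a < b ∧ ∀ x ∈ insert n (insert 1 T), a < x → a + L < x := by
      by_contra! hsmall
      exact hbad ((sortedLT_sort _).isChain_sub_le (by simpa using hsmall))
    have hbn := hTn b hb
    have hLb := hgap b hb hab
    refine mem_biUnion.mpr ⟨a, mem_range.mpr (by omega), mem_filter.mpr ⟨hTP, ?_⟩⟩
    refine disjoint_left.mpr fun x hxT hxW => ?_
    obtain ⟨hax, hxL⟩ := mem_Ioc.mp hxW
    have := hgap x (mem_insert_of_mem (mem_insert_of_mem hxT)) hax
    omega
  have hfamily : ∀ a ∈ range (n - L),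
      (((Icc 1 n).powersetCard m).filter (fun T => Disjoint T (window a))).card
        = (n - L).choose m := by
    intro a ha
    have hsub : window a ⊆ Icc 1 n :=
      fun x hx => by grind
    rw [filter_disjoint_powersetCard, card_powersetCard, card_sdiff_of_subset hsub]
    simp [window]
  calc _ ≤ _ := card_le_card hcover
    _ ≤ _ := card_biUnion_le
    _ = (n - L) * (n - L).choose m := by
      rw [sum_congr rfl hfamily, sum_const, card_range, smul_eq_mul]

/-- Let `T` be a uniformly random subset of `{1,...,n}` of cardinality `⌈n/2⌉`.
With the sentinels `1` and `n` adjoined, with probability at least `1 - 1/n`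
every gap between consecutive elements (in increasing order) is at most
`4⌈log₂ n⌉`. -/
theorem random_subset_small_gaps (n : ℕ) (hn : 1 ≤ n) :
    (1 - 1 / (n : ℝ)) * (((Finset.Icc 1 n).powersetCard ((n + 1) / 2)).card : ℝ)
      ≤ ((((Finset.Icc 1 n).powersetCard ((n + 1) / 2)).filter
          (fun (T : Finset ℕ) => List.IsChain (fun a b => b - a ≤ 4 * Nat.clog 2 n)
            ((insert n (insert 1 T)).sort (· ≤ ·)))).card : ℝ) := by
  set m := (n + 1) / 2
  set L := 4 * Nat.clog 2 n
  set P := (Icc 1 n).powersetCard m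
  set good := P.filter (fun (T : Finset ℕ) =>
    List.IsChain (fun a b => b - a ≤ L) ((insert n (insert 1 T)).sort (· ≤ ·)))
  set bad := P.filter (fun (T : Finset ℕ) =>
    ¬ List.IsChain (fun a b => b - a ≤ L) ((insert n (insert 1 T)).sort (· ≤ ·)))
  have hclog : n ≤ 2 ^ Nat.clog 2 n := Nat.le_pow_clog one_lt_two n
  have hwindows : n * (n - L) ≤ 2 ^ L :=
    calc n * (n - L) ≤ 2 ^ Nat.clog 2 n * 2 ^ Nat.clog 2 n :=
          Nat.mul_le_mul hclog ((Nat.sub_le n L).trans hclog)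
      _ ≤ 2 ^ L := by rw [← pow_add]; exact Nat.pow_le_pow_right two_pos (by omega)
  have hbad : n * bad.card ≤ P.card :=
    calc n * bad.card ≤ n * ((n - L) * (n - L).choose m) :=
          Nat.mul_le_mul_left n (card_filter_not_isChain_sort_le hn m L)
      _ = n * (n - L) * (n - L).choose m := (mul_assoc ..).symm
      _ ≤ 2 ^ L * (n - L).choose m := Nat.mul_le_mul_right _ hwindows
      _ ≤ n.choose m := Nat.two_pow_mul_choose_sub_le_choose (by omega) (by omega) L
      _ = P.card := by simp [P]
  have hsplit : (good.card : ℝ) + bad.card = P.card := by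
    exact_mod_cast card_filter_add_card_filter_not _
  have hbad' : (n : ℝ) * bad.card ≤ P.card := by exact_mod_cast hbad
  have hn' : (0 : ℝ) < n := by exact_mod_cast hn
  rw [one_sub_div hn'.ne', div_mul_eq_mul_div, div_le_iff₀ hn']
  nlinarith
end

section
/- Let F be a finite family of σ-rectangular objects in R^d such that for any two objects F1, F2 and any dimension j, the side lengths of their circumscribing boxes satisfy l_j(Out(F1))/l_j(Out(F2)) ∈ [1/2, 2]. Then the maximum number of pairwise disjoint objects in F is at most (10σ)^d times the maximum number of pairwise disjoint boxes in Out(F) = {Out(F) : F ∈ F}. -/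
open scoped Classical

lemma coord {σ o l a L b M : ℝ} (hσ : 1 < σ) (hl : 0 ≤ l)
    (hL2 : L ≤ 2*l) (hlL : l ≤ 2*L) (hM : L/σ ≤ M)
    (hba : a ≤ b) (hbM : b + M ≤ a + L) (hao : a ≤ o + l) (hoa : o ≤ a + L) :
    b ≤ (o - 2*l) + (l/(2*σ)) * ((⌈(b - (o - 2*l)) / (l/(2*σ))⌉.toNat : ℝ)) ∧
    (o - 2*l) + (l/(2*σ)) * ((⌈(b - (o - 2*l)) / (l/(2*σ))⌉.toNat : ℝ)) ≤ b + M ∧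
    (⌈(b - (o - 2*l)) / (l/(2*σ))⌉.toNat) < ⌊10*σ - 3⌋₊ + 1 := by
  have hσ0 : (0:ℝ) < σ := by linarith
  rcases eq_or_lt_of_le hl with hl0 | hlpos
  · -- l = 0
    have hl0' : l = 0 := hl0.symm
    subst hl0'
    have hL0 : L = 0 := by linarith
    have hao' : a = o := by linarith
    have hM0 : 0 ≤ M := by
      have : L/σ = 0 := by rw [hL0]; simp
      linarith [hM, this]
    have hbo : b = o := by nlinarith
    simp only [mul_zero, sub_zero, zero_div, div_zero, Int.ceil_zero, Int.toNat_zero,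
      Nat.cast_zero, mul_zero, add_zero]
    refine ⟨by linarith, by nlinarith, by positivity⟩
  · -- l > 0
    set δ := l/(2*σ) with hδ
    have hδpos : 0 < δ := by positivity
    set t' := b - (o - 2*l) with ht'
    have ht'0 : 0 ≤ t' := by linarith
    set k' := ⌈t'/δ⌉ with hk'
    have hk'0 : 0 ≤ k' := Int.ceil_nonneg (by positivity)
    have hcast : ((k'.toNat : ℕ) : ℝ) = (k' : ℝ) := by
      exact_mod_cast Int.toNat_of_nonneg hk'0
    have h1 : t' ≤ δ * k' := by
      have := Int.le_ceil (t'/δ)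
      rw [div_le_iff₀ hδpos] at this
      linarith [this]
    have h2 : δ * (k':ℝ) < t' + δ := by
      have := Int.ceil_lt_add_one (t'/δ)
      have h3 : (k':ℝ) < t'/δ + 1 := by exact_mod_cast this
      have := (mul_lt_mul_iff_right₀ hδpos).mpr h3
      calc δ * (k':ℝ) < δ * (t'/δ + 1) := this
        _ = t' + δ := by field_simp
    have hδM : δ ≤ M := by
      have h4 : δ ≤ L/σ := by
        rw [hδ, div_le_div_iff₀ (by linarith) hσ0]
        nlinarith
      linarith
    have hMσ : L ≤ M * σ := by
      rw [div_le_iff₀ hσ0] at hM; linarith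
    refine ⟨by rw [hcast]; linarith, by rw [hcast]; linarith, ?_⟩
    -- bound on k'
    have hkb : (k':ℝ) < 10*σ - 3 := by
      have ht'b : t' * σ ≤ 5*l*σ - 2*l := by nlinarith
      have hδ2 : δ * (2*σ) = l := by rw [hδ]; field_simp
      have hgoal : δ * (k':ℝ) < δ * (10*σ - 3) := by nlinarith
      exact (mul_lt_mul_iff_right₀ hδpos).mp hgoal
    have : k'.toNat ≤ ⌊10*σ - 3⌋₊ := by
      apply Nat.le_floor
      rw [hcast]; linarith
    omega

lemma key {d : ℕ} {ι : Type*} {σ : ℝ} (hσ : 1 < σ)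
    (obj : ι → Set (Fin d → ℝ))
    (inLo inHi outLo outHi : ι → Fin d → ℝ)
    (hin : ∀ i, Set.Icc (inLo i) (inHi i) ⊆ obj i)
    (hout : ∀ i, obj i ⊆ Set.Icc (outLo i) (outHi i))
    (hfat : ∀ i, ∀ j : Fin d, (outHi i j - outLo i j) / σ ≤ inHi i j - inLo i j)
    (hratio : ∀ i i', ∀ j : Fin d,
      outHi i j - outLo i j ≤ 2 * (outHi i' j - outLo i' j))
    (hnn : ∀ i, ∀ j : Fin d, 0 ≤ outHi i j - outLo i j)
    (t : ι) (S' : Finset ι)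
    (hdisj : ∀ i ∈ S', ∀ i' ∈ S', i ≠ i' → Disjoint (obj i) (obj i'))
    (hmeet : ∀ i ∈ S',
      ¬ Disjoint (Set.Icc (outLo i) (outHi i)) (Set.Icc (outLo t) (outHi t))) :
    (S'.card : ℝ) ≤ (10 * σ) ^ d := by
  have hσ0 : (0:ℝ) < σ := by linarith
  have hinlen : ∀ i, ∀ j : Fin d, 0 ≤ inHi i j - inLo i j := fun i j =>
    le_trans (div_nonneg (hnn i j) hσ0.le) (hfat i j)
  have hle : ∀ i, inLo i ≤ inHi i := fun i j => by linarith [hinlen i j]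
  have hlomem : ∀ i, inLo i ∈ Set.Icc (outLo i) (outHi i) := fun i =>
    hout i (hin i (Set.mem_Icc.mpr ⟨le_refl _, hle i⟩))
  have hhimem : ∀ i, inHi i ∈ Set.Icc (outLo i) (outHi i) := fun i =>
    hout i (hin i (Set.mem_Icc.mpr ⟨hle i, le_refl _⟩))
  set n := ⌊10*σ - 3⌋₊ + 1 with hn
  let c : Fin d → ℝ := fun j => outLo t j - 2*(outHi t j - outLo t j)
  let δ : Fin d → ℝ := fun j => (outHi t j - outLo t j)/(2*σ)
  let K : ι → Fin d → ℕ := fun i j => (⌈(inLo i j - c j)/(δ j)⌉).toNat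
  let g : ι → Fin d → ℝ := fun i j => c j + δ j * (K i j : ℝ)
  have main : ∀ i ∈ S', ∀ j : Fin d,
      (inLo i j ≤ g i j ∧ g i j ≤ inHi i j) ∧ K i j < n := by
    intro i hi j
    obtain ⟨x, hx1, hx2⟩ := Set.not_disjoint_iff.mp (hmeet i hi)
    rw [Set.mem_Icc] at hx1 hx2
    have hx1l := hx1.1 j; have hx1r := hx1.2 j
    have hx2l := hx2.1 j; have hx2r := hx2.2 j
    have hba : outLo i j ≤ inLo i j := (Set.mem_Icc.mp (hlomem i)).1 j
    have hhi : inHi i j ≤ outHi i j := (Set.mem_Icc.mp (hhimem i)).2 j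
    have h := coord (o := outLo t j) (a := outLo i j) (b := inLo i j)
      (M := inHi i j - inLo i j)
      hσ (hnn t j) (hratio i t j) (hratio t i j) (hfat i j)
      hba (by linarith) (by linarith) (by linarith)
    exact ⟨⟨h.1, by show c j + δ j * (K i j : ℝ) ≤ inHi i j; simp only [K, c, δ]; linarith [h.2.1]⟩, h.2.2⟩
  have hg_mem : ∀ i ∈ S', g i ∈ obj i := fun i hi =>
    hin i (Set.mem_Icc.mpr ⟨fun j => (main i hi j).1.1, fun j => (main i hi j).1.2⟩)
  have hinj : Set.InjOn K S' := by
    intro i hi i' hi' hK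
    by_contra hne
    have hgij : g i = g i' := by
      funext j
      show c j + δ j * (K i j : ℝ) = c j + δ j * (K i' j : ℝ)
      rw [congrFun hK j]
    have hmem2 : g i ∈ obj i' := hgij ▸ hg_mem i' hi'
    exact Set.disjoint_left.mp (hdisj i hi i' hi' hne) (hg_mem i hi) hmem2
  have hcard : S'.card ≤ n ^ d := by
    have hK := Finset.card_le_card_of_injOn K
      (fun i hi => Fintype.mem_piFinset.mpr fun j =>
        Finset.mem_range.mpr (main i hi j).2) hinj
    rwa [Fintype.card_piFinset, Finset.prod_const, Finset.card_range,
      Finset.card_univ, Fintype.card_fin] at hK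
  have hnr : (n : ℝ) ≤ 10*σ := by
    have h0 : (0:ℝ) ≤ 10*σ - 3 := by linarith
    have := Nat.floor_le h0
    push_cast [hn]
    linarith
  calc (S'.card : ℝ) ≤ ((n:ℕ):ℝ) ^ d := by exact_mod_cast hcard
    _ ≤ (10*σ)^d := pow_le_pow_left₀ (Nat.cast_nonneg n) hnr d

/-- Let `F` be a finite family of `σ`-rectangular objects in `ℝ^d` (each object
`obj i` contains an inscribed box `Icc (inLo i) (inHi i)` and is contained in a
circumscribing box `Icc (outLo i) (outHi i)`, with inscribed side lengths at
least `1/σ` times the circumscribing ones) such that the side lengths of any two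
circumscribing boxes are within a factor of 2 of each other in each dimension.
Then the maximum number of pairwise disjoint objects is at most `(10σ)^d` times
the maximum number of pairwise disjoint circumscribing boxes. -/
theorem sigma_rectangular_opt_bound (d : ℕ) {ι : Type*} [Fintype ι]
    (σ : ℝ) (hσ : 1 < σ)
    (obj : ι → Set (Fin d → ℝ))
    (inLo inHi outLo outHi : ι → Fin d → ℝ)
    (hin : ∀ i, Set.Icc (inLo i) (inHi i) ⊆ obj i)
    (hout : ∀ i, obj i ⊆ Set.Icc (outLo i) (outHi i))
    (hfat : ∀ i, ∀ j : Fin d, (outHi i j - outLo i j) / σ ≤ inHi i j - inLo i j)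
    (hratio : ∀ i i', ∀ j : Fin d,
      outHi i j - outLo i j ≤ 2 * (outHi i' j - outLo i' j)) :
    ∀ S : Finset ι,
      (∀ i ∈ S, ∀ i' ∈ S, i ≠ i' → Disjoint (obj i) (obj i')) →
      ∃ T : Finset ι,
        (∀ i ∈ T, ∀ i' ∈ T, i ≠ i' →
          Disjoint (Set.Icc (outLo i) (outHi i)) (Set.Icc (outLo i') (outHi i'))) ∧
        (S.card : ℝ) ≤ (10 * σ) ^ d * (T.card : ℝ) := by
  intro S hS
  have hσ0 : (0:ℝ) < σ := by linarith
  have hpow1 : (1:ℝ) ≤ (10*σ)^d := by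
    calc (1:ℝ) = 1^d := (one_pow d).symm
      _ ≤ (10*σ)^d := pow_le_pow_left₀ zero_le_one (by linarith) d
  by_cases hnn : ∀ i, ∀ j : Fin d, 0 ≤ outHi i j - outLo i j
  · -- nondegenerate case
    have hOutNe : ∀ i, (Set.Icc (outLo i) (outHi i)).Nonempty := by
      intro i
      refine Set.nonempty_Icc.mpr (fun j => by linarith [hnn i j])
    -- pick a maximum-cardinality T
    set C : Finset (Finset ι) := S.powerset.filter
      (fun T => ∀ i ∈ T, ∀ i' ∈ T, i ≠ i' →
        Disjoint (Set.Icc (outLo i) (outHi i)) (Set.Icc (outLo i') (outHi i'))) with hC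
    have hCne : C.Nonempty := ⟨∅, by simp [hC]⟩
    obtain ⟨T, hTC, hTmax⟩ := C.exists_max_image (fun T => T.card) hCne
    rw [hC, Finset.mem_filter, Finset.mem_powerset] at hTC
    refine ⟨T, hTC.2, ?_⟩
    -- every i in S meets some t in T
    have hcover : ∀ i ∈ S, ∃ t ∈ T,
        ¬ Disjoint (Set.Icc (outLo i) (outHi i)) (Set.Icc (outLo t) (outHi t)) := by
      intro i hi
      by_contra hc
      push_neg at hc
      have hiT : i ∉ T := by
        intro hiT
        obtain ⟨x, hx⟩ := hOutNe i
        exact Set.not_disjoint_iff.mpr ⟨x, hx, hx⟩ (hc i hiT)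
      have hins : insert i T ∈ C := by
        rw [hC, Finset.mem_filter, Finset.mem_powerset]
        refine ⟨Finset.insert_subset hi hTC.1, ?_⟩
        intro a ha b hb hab
        rcases Finset.mem_insert.mp ha with rfl | ha'
        · rcases Finset.mem_insert.mp hb with rfl | hb'
          · exact absurd rfl hab
          · exact hc b hb'
        · rcases Finset.mem_insert.mp hb with rfl | hb'
          · exact (hc a ha').symm
          · exact hTC.2 a ha' b hb' hab
      have := hTmax _ hins
      have : (insert i T).card = T.card + 1 := Finset.card_insert_of_notMem hiT
      omega
    -- S is covered by the fibers
    have hsub : S ⊆ T.biUnion (fun t => S.filter (fun i =>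
        ¬ Disjoint (Set.Icc (outLo i) (outHi i)) (Set.Icc (outLo t) (outHi t)))) := by
      intro i hi
      obtain ⟨t, ht, hmt⟩ := hcover i hi
      exact Finset.mem_biUnion.mpr ⟨t, ht, Finset.mem_filter.mpr ⟨hi, hmt⟩⟩
    have hcard : (S.card : ℝ) ≤ ∑ t ∈ T, ((S.filter (fun i =>
        ¬ Disjoint (Set.Icc (outLo i) (outHi i)) (Set.Icc (outLo t) (outHi t)))).card : ℝ) := by
      have h1 := Finset.card_le_card hsub
      have h2 := Finset.card_biUnion_le (s := T) (t := fun t => S.filter (fun i =>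
        ¬ Disjoint (Set.Icc (outLo i) (outHi i)) (Set.Icc (outLo t) (outHi t))))
      have := le_trans h1 h2
      exact_mod_cast this
    have hfiber : ∀ t ∈ T, ((S.filter (fun i =>
        ¬ Disjoint (Set.Icc (outLo i) (outHi i)) (Set.Icc (outLo t) (outHi t)))).card : ℝ)
        ≤ (10*σ)^d := by
      intro t ht
      apply key hσ obj inLo inHi outLo outHi hin hout hfat hratio hnn t
      · intro a ha b hb hab
        exact hS a (Finset.mem_filter.mp ha).1 b (Finset.mem_filter.mp hb).1 hab
      · intro a ha
        exact (Finset.mem_filter.mp ha).2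
    calc (S.card : ℝ) ≤ ∑ t ∈ T, ((S.filter (fun i =>
          ¬ Disjoint (Set.Icc (outLo i) (outHi i)) (Set.Icc (outLo t) (outHi t)))).card : ℝ) :=
            hcard
      _ ≤ ∑ _t ∈ T, (10*σ)^d := Finset.sum_le_sum hfiber
      _ = (10*σ)^d * T.card := by rw [Finset.sum_const, nsmul_eq_mul, mul_comm]
  · -- degenerate case: some out-box is empty, hence all are
    push_neg at hnn
    obtain ⟨i₀, j₀, hneg⟩ := hnn
    have hempty : ∀ i, Set.Icc (outLo i) (outHi i) = ∅ := by
      intro i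
      apply Set.Icc_eq_empty
      intro hle
      have := hle j₀
      have := hratio i i₀ j₀
      linarith
    refine ⟨S, fun i _ i' _ _ => by simp [hempty i], ?_⟩
    calc (S.card : ℝ) = 1 * S.card := (one_mul _).symm
      _ ≤ (10*σ)^d * S.card := by
          apply mul_le_mul_of_nonneg_right hpow1 (Nat.cast_nonneg _)
end

section
/- There exists a family of n axis-aligned rectangles in the plane whose inductive independence number is at least n/2. Concretely, take n/2 pairwise disjoint tall-thin rectangles V and n/2 pairwise disjoint short-wide rectangles H such that every rectangle in V intersects every rectangle in H; then for any linear order ≺ on V ∪ H whose minimum element R is in H, the independent set V satisfies: every member of V succeeds R in ≺ and intersects R, so the inductive independence number is at least |V| = n/2. -/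
open scoped Classical

/-- There is a family of `n = 2t` axis-aligned rectangles in the plane whose
inductive independence number is at least `n/2 = t`: for every linear order on
the rectangles (given by a permutation `ord`, where `u ≻ v` iff
`ord v < ord u`), there is an independent set `U` and a rectangle `v` such that
at least `t` members of `U` succeed `v` and intersect `v`. -/
theorem rectangles_inductive_independence_lower (t : ℕ) (ht : 1 ≤ t) :
    ∃ rect : Fin (2 * t) → (ℝ × ℝ) × (ℝ × ℝ),
      ∀ ord : Equiv.Perm (Fin (2 * t)),
        ∃ U : Finset (Fin (2 * t)),
          (∀ i ∈ U, ∀ j ∈ U, i ≠ j →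
            Disjoint (Set.Icc (rect i).1 (rect i).2)
                     (Set.Icc (rect j).1 (rect j).2)) ∧
          ∃ v : Fin (2 * t),
            t ≤ (U.filter (fun u => ord v < ord u ∧ u ≠ v ∧
              ¬ Disjoint (Set.Icc (rect u).1 (rect u).2)
                         (Set.Icc (rect v).1 (rect v).2))).card := by
  set rect : Fin (2 * t) → (ℝ × ℝ) × (ℝ × ℝ) := fun i =>
    if i.val < t then ((2 * i.val, 0), (2 * i.val + 1, 4 * t))
    else ((0, 2 * ((i.val : ℝ) - t)), (4 * t, 2 * ((i.val : ℝ) - t) + 1)) with hrect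
  have ht' : (1 : ℝ) ≤ t := by exact_mod_cast ht
  -- a vertical and a horizontal rectangle always intersect
  have hcross : ∀ i j : Fin (2 * t), i.val < t → t ≤ j.val →
      ¬ Disjoint (Set.Icc (rect i).1 (rect i).2) (Set.Icc (rect j).1 (rect j).2) := by
    intro i j hi hj
    have hi' : ((i.val : ℝ)) < t := by exact_mod_cast hi
    have hj' : ((t : ℝ)) ≤ j.val := by exact_mod_cast hj
    have hj2 : ((j.val : ℝ)) < 2 * t := by exact_mod_cast j.isLt
    rw [Set.not_disjoint_iff]
    refine ⟨((2 * i.val : ℝ), 2 * ((j.val : ℝ) - t)), ?_, ?_⟩ <;>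
      simp only [hrect, if_pos hi, if_neg (by omega : ¬ j.val < t), Set.mem_Icc,
        Prod.mk_le_mk] <;>
      exact ⟨⟨by linarith, by linarith⟩, by linarith, by linarith⟩
  -- two vertical rectangles are disjoint
  have hvert : ∀ i j : Fin (2 * t), i.val < t → j.val < t → i ≠ j →
      Disjoint (Set.Icc (rect i).1 (rect i).2) (Set.Icc (rect j).1 (rect j).2) := by
    intro i j hi hj hij
    have hij' : i.val ≠ j.val := fun h => hij (Fin.ext h)
    simp only [hrect, if_pos hi, if_pos hj]
    rw [Set.Icc_prod_eq, Set.Icc_prod_eq]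
    rw [Set.disjoint_prod]
    left
    rw [Set.disjoint_left]
    rintro x hx hx'
    simp only [Set.mem_Icc] at hx hx'
    rcases lt_or_gt_of_ne hij' with h | h
    · have : (i.val : ℝ) + 1 ≤ j.val := by exact_mod_cast h
      linarith [hx.1, hx.2, hx'.1, hx'.2]
    · have : (j.val : ℝ) + 1 ≤ i.val := by exact_mod_cast h
      linarith [hx.1, hx.2, hx'.1, hx'.2]
  -- two horizontal rectangles are disjoint
  have hhor : ∀ i j : Fin (2 * t), t ≤ i.val → t ≤ j.val → i ≠ j →
      Disjoint (Set.Icc (rect i).1 (rect i).2) (Set.Icc (rect j).1 (rect j).2) := by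
    intro i j hi hj hij
    have hij' : i.val ≠ j.val := fun h => hij (Fin.ext h)
    simp only [hrect, if_neg (by omega : ¬ i.val < t), if_neg (by omega : ¬ j.val < t)]
    rw [Set.Icc_prod_eq, Set.Icc_prod_eq]
    rw [Set.disjoint_prod]
    right
    rw [Set.disjoint_left]
    rintro x hx hx'
    simp only [Set.mem_Icc] at hx hx'
    rcases lt_or_gt_of_ne hij' with h | h
    · have : (i.val : ℝ) + 1 ≤ j.val := by exact_mod_cast h
      linarith [hx.1, hx.2, hx'.1, hx'.2]
    · have : (j.val : ℝ) + 1 ≤ i.val := by exact_mod_cast h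
      linarith [hx.1, hx.2, hx'.1, hx'.2]
  refine ⟨rect, fun ord => ?_⟩
  have h2t : 0 < 2 * t := by omega
  set z : Fin (2 * t) := ⟨0, h2t⟩ with hz
  set m := ord.symm z with hm
  have hordm : ord m = z := ord.apply_symm_apply z
  by_cases hmv : m.val < t
  · -- minimum is vertical: take U the horizontal rectangles
    refine ⟨(Finset.univ : Finset (Fin t)).image
      (fun i => (⟨i.val + t, by omega⟩ : Fin (2 * t))), ?_, m, ?_⟩
    · intro i hi j hj hij
      simp only [Finset.mem_image] at hi hj
      obtain ⟨a, -, rfl⟩ := hi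
      obtain ⟨b, -, rfl⟩ := hj
      exact hhor _ _ (by simp) (by simp) hij
    · have hsub : (Finset.univ : Finset (Fin t)).image
          (fun i => (⟨i.val + t, by omega⟩ : Fin (2 * t))) ⊆
          Finset.filter (fun u => ord m < ord u ∧ u ≠ m ∧
            ¬ Disjoint (Set.Icc (rect u).1 (rect u).2) (Set.Icc (rect m).1 (rect m).2))
            ((Finset.univ : Finset (Fin t)).image
              (fun i => (⟨i.val + t, by omega⟩ : Fin (2 * t)))) := by
        intro u hu
        simp only [Finset.mem_image] at hu
        obtain ⟨a, -, rfl⟩ := hu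
        have hune : (⟨a.val + t, by omega⟩ : Fin (2 * t)) ≠ m := by
          intro h
          rw [← h] at hmv
          simp only [Fin.val_mk] at hmv
          omega
        refine Finset.mem_filter.2 ⟨by simp, ?_, hune, ?_⟩
        · rw [hordm, Fin.lt_def]
          refine Nat.pos_of_ne_zero (fun h => hune (ord.injective ?_))
          rw [hordm]; exact Fin.ext h
        · intro hd
          exact hcross m ⟨a.val + t, by omega⟩ hmv (by simp) hd.symm
      calc t = ((Finset.univ : Finset (Fin t)).image
            (fun i => (⟨i.val + t, by omega⟩ : Fin (2 * t)))).card := by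
              rw [Finset.card_image_of_injective _
                (fun a b h => by simpa [Fin.ext_iff] using h), Finset.card_univ,
                Fintype.card_fin]
        _ ≤ _ := Finset.card_le_card hsub
  · -- minimum is horizontal: take U the vertical rectangles
    refine ⟨(Finset.univ : Finset (Fin t)).image
      (fun i => (⟨i.val, by omega⟩ : Fin (2 * t))), ?_, m, ?_⟩
    · intro i hi j hj hij
      simp only [Finset.mem_image] at hi hj
      obtain ⟨a, -, rfl⟩ := hi
      obtain ⟨b, -, rfl⟩ := hj
      exact hvert _ _ (by simp) (by simp) hij
    · have hsub : (Finset.univ : Finset (Fin t)).image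
          (fun i => (⟨i.val, by omega⟩ : Fin (2 * t))) ⊆
          Finset.filter (fun u => ord m < ord u ∧ u ≠ m ∧
            ¬ Disjoint (Set.Icc (rect u).1 (rect u).2) (Set.Icc (rect m).1 (rect m).2))
            ((Finset.univ : Finset (Fin t)).image
              (fun i => (⟨i.val, by omega⟩ : Fin (2 * t)))) := by
        intro u hu
        simp only [Finset.mem_image] at hu
        obtain ⟨a, -, rfl⟩ := hu
        have hune : (⟨a.val, by omega⟩ : Fin (2 * t)) ≠ m := by
          intro h
          rw [← h] at hmv
          simp only [Fin.val_mk] at hmv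
          exact hmv a.isLt
        refine Finset.mem_filter.2 ⟨by simp, ?_, hune, ?_⟩
        · rw [hordm, Fin.lt_def]
          refine Nat.pos_of_ne_zero (fun h => hune (ord.injective ?_))
          rw [hordm]; exact Fin.ext h
        · exact hcross ⟨a.val, by omega⟩ m (by simp [a.isLt]) (by omega)
      calc t = ((Finset.univ : Finset (Fin t)).image
            (fun i => (⟨i.val, by omega⟩ : Fin (2 * t)))).card := by
              rw [Finset.card_image_of_injective _
                (fun a b h => by simpa [Fin.ext_iff] using h), Finset.card_univ,
                Fintype.card_fin]
        _ ≤ _ := Finset.card_le_card hsub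
end

section
/- In a uniform d-dimensional grid with cell side length l_j in dimension j, every axis-aligned box whose side length in each dimension j lies in [l_j, 2l_j) intersects at most 3^d grid cells, and every grid cell intersects at most 5^d pairwise-disjoint such boxes. -/
open scoped Classical

/-- 1D lemma for the cell-count bound. -/
lemma dim1_cells {l : ℝ} (hl : 0 < l) {m : ℤ} {a b x : ℝ}
    (h1 : (m : ℝ) * l ≤ x) (h2 : x < ((m : ℝ) + 1) * l)
    (ha : a ≤ x) (hb : x ≤ b) (hba : b - a < 2 * l) :
    ⌊a / l⌋ ≤ m ∧ m ≤ ⌊a / l⌋ + 2 := by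
  constructor
  · have h3 : a / l < (m : ℝ) + 1 := by
      rw [div_lt_iff₀ hl]; exact lt_of_le_of_lt ha h2
    have := lt_of_le_of_lt (Int.floor_le (a / l)) h3
    have : (⌊a / l⌋ : ℝ) < ((m + 1 : ℤ) : ℝ) := by push_cast; linarith
    have := Int.cast_lt.mp this
    omega
  · have h4 : ((m : ℝ) - 2) * l < a := by nlinarith
    have h5 : ((m : ℝ) - 2) < a / l := by
      rw [lt_div_iff₀ hl]; linarith
    have : ((m - 2 : ℤ) : ℝ) ≤ a / l := by push_cast; linarith
    have := Int.le_floor.mpr this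
    omega

/-- 1D lemma for the box-count bound. -/
lemma dim1_boxes {l : ℝ} (hl : 0 < l) {m : ℤ} {p q x : ℝ}
    (hlen : l ≤ q - p) (h1 : (m : ℝ) * l ≤ x) (h2 : x < ((m : ℝ) + 1) * l)
    (hp : p ≤ x) (hq : x ≤ q) :
    (2 * m - 2 ≤ max ⌈2 * p / l⌉ (2 * m - 2) ∧
      max ⌈2 * p / l⌉ (2 * m - 2) ≤ 2 * m + 2) ∧
    (p ≤ ((max ⌈2 * p / l⌉ (2 * m - 2) : ℤ) : ℝ) * (l / 2) ∧
      ((max ⌈2 * p / l⌉ (2 * m - 2) : ℤ) : ℝ) * (l / 2) ≤ q) := by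
  set k : ℤ := max ⌈2 * p / l⌉ (2 * m - 2) with hk
  have hpx : p < ((m : ℝ) + 1) * l := lt_of_le_of_lt hp h2
  have hceil_le : ⌈2 * p / l⌉ ≤ 2 * m + 2 := by
    rw [Int.ceil_le, div_le_iff₀ hl]
    push_cast; nlinarith
  have hceil_ge : (2 * p / l : ℝ) ≤ (⌈2 * p / l⌉ : ℝ) := Int.le_ceil _
  have hceil_lt : (⌈2 * p / l⌉ : ℝ) < 2 * p / l + 1 := Int.ceil_lt_add_one _
  have hid : 2 * p / l * (l / 2) = p := by field_simp
  have hcast : (k : ℝ) = max ((⌈2 * p / l⌉ : ℤ) : ℝ) (((2 * m - 2 : ℤ)) : ℝ) := by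
    rw [hk]; push_cast; rfl
  refine ⟨⟨le_max_right _ _, max_le hceil_le (by omega)⟩, ?_, ?_⟩
  · have h5 : (2 * p / l : ℝ) ≤ (k : ℝ) := by
      refine le_trans hceil_ge ?_
      exact_mod_cast Int.cast_le.mpr (le_max_left _ _)
    have := mul_le_mul_of_nonneg_right h5 (show (0:ℝ) ≤ l / 2 by linarith)
    linarith [hid ▸ this]
  · rw [hcast, max_mul_of_nonneg _ _ (show (0:ℝ) ≤ l / 2 by linarith)]
    refine max_le ?_ ?_
    · have : (⌈2 * p / l⌉ : ℝ) * (l / 2) < (2 * p / l + 1) * (l / 2) :=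
        mul_lt_mul_of_pos_right hceil_lt (by linarith)
      nlinarith
    · push_cast
      have : (m : ℝ) * l ≤ q := le_trans h1 hq
      nlinarith

/-- In a uniform `d`-dimensional grid with cell side length `l j` in dimension
`j` (cells `∏_j [m_j·l_j, (m_j+1)·l_j)`), every axis-aligned box with side
lengths in `[l_j, 2·l_j)` intersects at most `3^d` grid cells, and every grid
cell intersects at most `5^d` pairwise-disjoint such boxes. -/
theorem grid_cell_box_bounds (d : ℕ) (l : Fin d → ℝ) (hl : ∀ j, 0 < l j) :
    (∀ a b : Fin d → ℝ,
      (∀ j, l j ≤ b j - a j ∧ b j - a j < 2 * l j) →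
      ∀ M : Finset (Fin d → ℤ),
        (∀ mv ∈ M,
          ({x : Fin d → ℝ | ∀ j, (mv j : ℝ) * l j ≤ x j ∧
              x j < ((mv j : ℝ) + 1) * l j} ∩ Set.Icc a b).Nonempty) →
        M.card ≤ 3 ^ d) ∧
    (∀ mv : Fin d → ℤ, ∀ 𝒮 : Finset ((Fin d → ℝ) × (Fin d → ℝ)),
      (∀ p ∈ 𝒮, ∀ j, l j ≤ p.2 j - p.1 j ∧ p.2 j - p.1 j < 2 * l j) →
      (∀ p ∈ 𝒮,
        ({x : Fin d → ℝ | ∀ j, (mv j : ℝ) * l j ≤ x j ∧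
            x j < ((mv j : ℝ) + 1) * l j} ∩ Set.Icc p.1 p.2).Nonempty) →
      (∀ p ∈ 𝒮, ∀ q ∈ 𝒮, p ≠ q →
        Disjoint (Set.Icc p.1 p.2) (Set.Icc q.1 q.2)) →
      𝒮.card ≤ 5 ^ d) := by
  constructor
  · intro a b hab M hM
    have hsub : M ⊆ Fintype.piFinset
        (fun j => Finset.Icc (⌊a j / l j⌋) (⌊a j / l j⌋ + 2)) := by
      intro mv hmv
      obtain ⟨x, hx1, hx2⟩ := hM mv hmv
      rw [Fintype.mem_piFinset]
      intro j
      rw [Finset.mem_Icc]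
      rw [Set.mem_Icc] at hx2
      exact dim1_cells (hl j) (hx1 j).1 (hx1 j).2 (hx2.1 j) (hx2.2 j) (hab j).2
    calc M.card ≤ _ := Finset.card_le_card hsub
      _ ≤ 3 ^ d := by
        rw [Fintype.card_piFinset]
        have : ∀ j : Fin d,
            (Finset.Icc (⌊a j / l j⌋) (⌊a j / l j⌋ + 2)).card = 3 := by
          intro j; rw [Int.card_Icc]; omega
        simp [this, Finset.prod_const]
  · intro mv 𝒮 hside hmeet hdisj
    set f : (Fin d → ℝ) × (Fin d → ℝ) → (Fin d → ℤ) :=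
      fun p j => max ⌈2 * p.1 j / l j⌉ (2 * mv j - 2) with hf
    have key : ∀ p ∈ 𝒮, (∀ j, 2 * mv j - 2 ≤ f p j ∧ f p j ≤ 2 * mv j + 2) ∧
        (fun j => (f p j : ℝ) * (l j / 2)) ∈ Set.Icc p.1 p.2 := by
      intro p hp
      obtain ⟨x, hx1, hx2⟩ := hmeet p hp
      rw [Set.mem_Icc] at hx2
      have H := fun j => dim1_boxes (hl j) (hside p hp j).1
        (hx1 j).1 (hx1 j).2 (hx2.1 j) (hx2.2 j)
      exact ⟨fun j => (H j).1, by
        rw [Set.mem_Icc]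
        exact ⟨fun j => (H j).2.1, fun j => (H j).2.2⟩⟩
    have hmaps : ∀ p ∈ 𝒮, f p ∈ Fintype.piFinset
        (fun j => Finset.Icc (2 * mv j - 2) (2 * mv j + 2)) := by
      intro p hp
      rw [Fintype.mem_piFinset]
      intro j
      rw [Finset.mem_Icc]
      exact ((key p hp).1 j)
    have hinj : Set.InjOn f 𝒮 := by
      intro p hp q hq hpq
      by_contra hne
      have hx_p := (key p hp).2
      have hx_q := (key q hq).2
      rw [hpq] at hx_p
      exact (Set.disjoint_left.mp (hdisj p hp q hq hne) hx_p) hx_q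
    calc 𝒮.card ≤ _ := Finset.card_le_card_of_injOn f hmaps hinj
      _ ≤ 5 ^ d := by
        rw [Fintype.card_piFinset]
        have : ∀ j : Fin d,
            (Finset.Icc (2 * mv j - 2) (2 * mv j + 2)).card = 5 := by
          intro j; rw [Int.card_Icc]; omega
        simp [this, Finset.prod_const]
end
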